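/- arXiv:2404.08123 — 4 statements merged into one kernel-verified Lean document; each statement's English description precedes it below -/
import Mathlib

section
/- Let k be a field of characteristic 2 and let A = k[x,y,z,w]/(xy, xz, xw, y^2, z^2, w^2, x^3 + yzw). Then every nonzero linear form ℓ in A_1 is a zero divisor on A; more precisely, for every nonzero ℓ ∈ A_1 there exists a nonzero linear form ℓ' ∈ A_1 with ℓℓ' = 0 in A. -/
/-!
Write `ℓ = a x + m` with `m = b y + c z + d w`. The relations give `x m = 0`, and in
characteristic 2 also `m² = b² y² + c² z² + d² w² = 0`, so `ℓ m = 0`: take `ℓ' = m`, or `ℓ' = y`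
when `m = 0`, i.e. `ℓ = a x`. Such an `ℓ'` is nonzero in `A` because the relations are forms of
degree at least 2, so nothing of degree 1 lies in the ideal.
-/

open MvPolynomial

namespace MvPolynomial

variable {σ R : Type*} [CommSemiring R]

/-- The ideal `(X i | i : σ) ^ n`, described by its coefficients. -/
def orderGEIdeal (n : ℕ) : Ideal (MvPolynomial σ R) where
  carrier := {p | ∀ m : σ →₀ ℕ, m.degree < n → coeff m p = 0}
  zero_mem' _ _ := coeff_zero _
  add_mem' hp hq m hm := by rw [coeff_add, hp m hm, hq m hm, add_zero]
  smul_mem' c p hp m hm := by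
    classical
    rw [smul_eq_mul, coeff_mul]
    refine Finset.sum_eq_zero fun x hx => ?_
    have hle : x.2.degree ≤ m.degree :=
      Finsupp.degree_mono (le_add_self.trans_eq (Finset.HasAntidiagonal.mem_antidiagonal.mp hx))
    rw [hp x.2 (hle.trans_lt hm), mul_zero]

theorem IsHomogeneous.mem_orderGEIdeal {p : MvPolynomial σ R} {d n : ℕ}
    (hp : p.IsHomogeneous d) (hnd : n ≤ d) : p ∈ orderGEIdeal n :=
  fun _ hm => hp.coeff_eq_zero (by omega)

theorem IsHomogeneous.eq_zero_of_mem_orderGEIdeal {p : MvPolynomial σ R} {d n : ℕ}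
    (hp : p.IsHomogeneous d) (hdn : d < n) (hmem : p ∈ orderGEIdeal n) : p = 0 := by
  ext m
  rw [coeff_zero]
  by_cases hm : m.degree = d
  · exact hmem m (hm ▸ hdn)
  · exact hp.coeff_eq_zero hm

theorem IsHomogeneous.eq_sum_C_coeff_mul_X [Fintype σ] {ℓ : MvPolynomial σ R}
    (hℓ : ℓ.IsHomogeneous 1) : ℓ = ∑ i, C (coeff (Finsupp.single i 1) ℓ) * X i := by
  classical
  ext m
  simp only [coeff_sum, coeff_C_mul, coeff_X, mul_ite, mul_one, mul_zero]
  by_cases hm : m.degree = 1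
  · obtain ⟨i, rfl⟩ : m ∈ Set.range (Finsupp.single · 1) := Finsupp.range_single_one ▸ hm
    rw [Finset.sum_eq_single_of_mem i (Finset.mem_univ i) fun j _ hji => if_neg
      ((Finsupp.single_left_injective one_ne_zero).ne hji), if_pos rfl]
  · rw [hℓ.coeff_eq_zero hm]
    refine (Finset.sum_eq_zero fun i _ => ite_eq_right_iff.mpr fun h => ?_).symm
    exact h ▸ hℓ.coeff_eq_zero hm

end MvPolynomial

section

variable (k : Type*) [CommRing k]

/-- `(xy, xz, xw, y², z², w², x³ + yzw)` with `x, y, z, w = X 0, X 1, X 2, X 3`. -/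
noncomputable abbrev relIdeal : Ideal (MvPolynomial (Fin 4) k) :=
  Ideal.span {X 0 * X 1, X 0 * X 2, X 0 * X 3,
      X 1 ^ 2, X 2 ^ 2, X 3 ^ 2, X 0 ^ 3 + X 1 * X 2 * X 3}

theorem relIdeal_le_orderGEIdeal_two : relIdeal k ≤ orderGEIdeal 2 := by
  have hX (i : Fin 4) : (X i : MvPolynomial (Fin 4) k).IsHomogeneous 1 := isHomogeneous_X k i
  have quad (i j : Fin 4) : (X i * X j : MvPolynomial (Fin 4) k) ∈ orderGEIdeal 2 :=
    ((hX i).mul (hX j)).mem_orderGEIdeal le_rfl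
  have square (i : Fin 4) : (X i ^ 2 : MvPolynomial (Fin 4) k) ∈ orderGEIdeal 2 :=
    sq (X i : MvPolynomial (Fin 4) k) ▸ quad i i
  simp only [Ideal.span_le, Set.insert_subset_iff, Set.singleton_subset_iff, SetLike.mem_coe]
  refine ⟨quad 0 1, quad 0 2, quad 0 3, square 1, square 2, square 3, add_mem ?_ ?_⟩
  · exact ((hX 0).pow 3).mem_orderGEIdeal (by norm_num)
  · exact (((hX 1).mul (hX 2)).mul (hX 3)).mem_orderGEIdeal (by norm_num)

variable {k}

theorem mk_relIdeal_ne_zero {p : MvPolynomial (Fin 4) k} (hp : p.IsHomogeneous 1) (hp0 : p ≠ 0) :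
    Ideal.Quotient.mk (relIdeal k) p ≠ 0 := fun h => hp0 <|
  hp.eq_zero_of_mem_orderGEIdeal one_lt_two <|
    relIdeal_le_orderGEIdeal_two k (Ideal.Quotient.eq_zero_iff_mem.mp h)

theorem X_zero_mul_mem_relIdeal (b c d : k) :
    X 0 * (C b * X 1 + C c * X 2 + C d * X 3) ∈ relIdeal k := by
  have h (i : Fin 4) (hi : X 0 * X i ∈ relIdeal k) (e : k) : X 0 * (C e * X i) ∈ relIdeal k :=
    mul_left_comm (X 0) (C e) (X i) ▸ Ideal.mul_mem_left _ _ hi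
  simp only [mul_add]
  exact add_mem (add_mem (h 1 (Ideal.subset_span (by simp)) b)
    (h 2 (Ideal.subset_span (by simp)) c)) (h 3 (Ideal.subset_span (by simp)) d)

theorem sq_mem_relIdeal [CharP k 2] (b c d : k) :
    (C b * X 1 + C c * X 2 + C d * X 3) ^ 2 ∈ relIdeal k := by
  have h (i : Fin 4) (hi : X i ^ 2 ∈ relIdeal k) (e : k) : (C e * X i) ^ 2 ∈ relIdeal k :=
    mul_pow (C e) (X i) 2 ▸ Ideal.mul_mem_left _ _ hi
  simp only [add_pow_char]
  exact add_mem (add_mem (h 1 (Ideal.subset_span (by simp)) b)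
    (h 2 (Ideal.subset_span (by simp)) c)) (h 3 (Ideal.subset_span (by simp)) d)

end

/-- over a field of characteristic 2, in
`A = k[x,y,z,w]/(xy, xz, xw, y², z², w², x³ + yzw)` every nonzero linear form
is annihilated by some nonzero linear form. -/
theorem stmt_0 (k : Type*) [Field k] [CharP k 2]
    (I : Ideal (MvPolynomial (Fin 4) k))
    (hI : I = Ideal.span {X 0 * X 1, X 0 * X 2, X 0 * X 3,
      X 1 ^ 2, X 2 ^ 2, X 3 ^ 2, X 0 ^ 3 + X 1 * X 2 * X 3}) :
    ∀ ℓ : MvPolynomial (Fin 4) k, ℓ.IsHomogeneous 1 →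
      Ideal.Quotient.mk I ℓ ≠ 0 →
      ∃ ℓ' : MvPolynomial (Fin 4) k, ℓ'.IsHomogeneous 1 ∧
        Ideal.Quotient.mk I ℓ' ≠ 0 ∧ Ideal.Quotient.mk I (ℓ * ℓ') = 0 := by
  change I = relIdeal k at hI
  subst hI
  intro ℓ hℓ _
  obtain ⟨a, b, c, d, hdec⟩ :
      ∃ a b c d : k, ℓ = C a * X 0 + (C b * X 1 + C c * X 2 + C d * X 3) := by
    rw [hℓ.eq_sum_C_coeff_mul_X, Fin.sum_univ_four]
    exact ⟨coeff (.single 0 1) ℓ, coeff (.single 1 1) ℓ, coeff (.single 2 1) ℓ,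
      coeff (.single 3 1) ℓ, by ring⟩
  set m : MvPolynomial (Fin 4) k := C b * X 1 + C c * X 2 + C d * X 3
  have hm : m.IsHomogeneous 1 :=
    ((isHomogeneous_C_mul_X _ 1).add (isHomogeneous_C_mul_X _ 2)).add (isHomogeneous_C_mul_X _ 3)
  simp only [Ideal.Quotient.eq_zero_iff_mem]
  by_cases hm0 : m = 0
  · refine ⟨X 1, isHomogeneous_X k 1, mk_relIdeal_ne_zero (isHomogeneous_X k 1) (X_ne_zero 1), ?_⟩
    rw [hdec, hm0, add_zero, mul_assoc]
    exact Ideal.mul_mem_left _ _ (Ideal.subset_span (by simp))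
  · refine ⟨m, hm, mk_relIdeal_ne_zero hm hm0, ?_⟩
    rw [hdec, add_mul, mul_assoc, ← sq]
    exact add_mem (Ideal.mul_mem_left _ _ (X_zero_mul_mem_relIdeal _ _ _)) (sq_mem_relIdeal _ _ _)
end

section
/- Let k be a field of characteristic 2 and let A = k[x,y,z,w]/(xy, xz, xw, y^2, z^2, w^2, x^3 + yzw). Then A does not have the weak Lefschetz property: there is no linear form ℓ ∈ A_1 such that multiplication by ℓ from A_1 to A_2 is injective. -/
open MvPolynomial

private lemma deg4 (d : Fin 4 →₀ ℕ) : d.degree = d 0 + d 1 + d 2 + d 3 := by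
  rw [Finsupp.degree_apply, Finset.sum_subset (Finset.subset_univ d.support)
    (by intro x _ hx; simpa using Finsupp.notMem_support_iff.mp hx)]
  simp [Fin.sum_univ_four]

private lemma lowcoeff (k : Type*) [Field k]
    (p : MvPolynomial (Fin 4) k)
    (hp : p ∈ Ideal.span ({X 0 * X 1, X 0 * X 2, X 0 * X 3,
      X 1 ^ 2, X 2 ^ 2, X 3 ^ 2, X 0 ^ 3 + X 1 * X 2 * X 3} :
        Set (MvPolynomial (Fin 4) k)))
    (m : Fin 4 →₀ ℕ) (hm : m.degree ≤ 1) : coeff m p = 0 := by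
  revert m
  induction hp using Submodule.span_induction with
  | mem g hg =>
    intro d hd
    have hX : ∀ i : Fin 4, (X i : MvPolynomial (Fin 4) k).IsHomogeneous 1 :=
      fun i => isHomogeneous_X k i
    rcases hg with h|h|h|h|h|h|h <;> subst h
    · exact ((hX 0).mul (hX 1)).coeff_eq_zero (by omega)
    · exact ((hX 0).mul (hX 2)).coeff_eq_zero (by omega)
    · exact ((hX 0).mul (hX 3)).coeff_eq_zero (by omega)
    · exact ((hX 1).pow 2).coeff_eq_zero (by omega)
    · exact ((hX 2).pow 2).coeff_eq_zero (by omega)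
    · exact ((hX 3).pow 2).coeff_eq_zero (by omega)
    · exact (((hX 0).pow 3).add (((hX 1).mul (hX 2)).mul (hX 3))).coeff_eq_zero (by omega)
  | zero => intro d hd; simp
  | add x y hx hy ihx ihy => intro d hd; simp [ihx d hd, ihy d hd]
  | smul r x hx ih =>
    intro d hd
    rw [smul_eq_mul, coeff_mul]
    refine Finset.sum_eq_zero fun ab hab => ?_
    rw [Finset.HasAntidiagonal.mem_antidiagonal] at hab
    have h2 : ab.2.degree ≤ d.degree := by
      have h0 := DFunLike.congr_fun hab (0 : Fin 4)
      have h1 := DFunLike.congr_fun hab (1 : Fin 4)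
      have h2 := DFunLike.congr_fun hab (2 : Fin 4)
      have h3 := DFunLike.congr_fun hab (3 : Fin 4)
      simp only [Finsupp.add_apply] at h0 h1 h2 h3
      rw [deg4, deg4]; omega
    rw [ih ab.2 (le_trans h2 hd), mul_zero]

private lemma decomp1 (k : Type*) [Field k] (ℓ : MvPolynomial (Fin 4) k)
    (h : ℓ.IsHomogeneous 1) :
    ℓ = C (coeff (Finsupp.single 0 1) ℓ) * X 0 + C (coeff (Finsupp.single 1 1) ℓ) * X 1
      + C (coeff (Finsupp.single 2 1) ℓ) * X 2 + C (coeff (Finsupp.single 3 1) ℓ) * X 3 := by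
  ext m
  have hs : ∀ i : Fin 4, (Finsupp.single i 1 : Fin 4 →₀ ℕ).degree = 1 := by
    intro i; fin_cases i <;> simp [deg4, Finsupp.single_apply]
  simp only [coeff_add, coeff_C_mul, coeff_X']
  by_cases hm : m.degree = 1
  · have hd := deg4 m
    have : m 0 + m 1 + m 2 + m 3 = 1 := by omega
    have key : (∃ i : Fin 4, m = Finsupp.single i 1) := by
      rcases Nat.lt_or_ge (m 0) 1 with h0 | h0
      · rcases Nat.lt_or_ge (m 1) 1 with h1 | h1
        · rcases Nat.lt_or_ge (m 2) 1 with h2 | h2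
          · exact ⟨3, by ext j; fin_cases j <;> simp [Finsupp.single_apply] <;> omega⟩
          · exact ⟨2, by ext j; fin_cases j <;> simp [Finsupp.single_apply] <;> omega⟩
        · exact ⟨1, by ext j; fin_cases j <;> simp [Finsupp.single_apply] <;> omega⟩
      · exact ⟨0, by ext j; fin_cases j <;> simp [Finsupp.single_apply] <;> omega⟩
    obtain ⟨i, rfl⟩ := key
    fin_cases i <;>
      simp (config := { decide := true }) [Finsupp.single_eq_single_iff]
  · rw [h.coeff_eq_zero (by omega)]
    have : ∀ i : Fin 4, (Finsupp.single i 1 : Fin 4 →₀ ℕ) ≠ m := by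
      intro i hi; exact hm (hi ▸ hs i)
    simp [this]

/-- over a field of characteristic 2, the algebra
`A = k[x,y,z,w]/(xy, xz, xw, y², z², w², x³ + yzw)` has no linear form `ℓ`
such that multiplication by `ℓ` from `A₁` to `A₂` is injective; in particular
`A` does not have the weak Lefschetz property. -/
theorem stmt_1 (k : Type*) [Field k] [CharP k 2]
    (I : Ideal (MvPolynomial (Fin 4) k))
    (hI : I = Ideal.span {X 0 * X 1, X 0 * X 2, X 0 * X 3,
      X 1 ^ 2, X 2 ^ 2, X 3 ^ 2, X 0 ^ 3 + X 1 * X 2 * X 3}) :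
    ¬ ∃ ℓ : MvPolynomial (Fin 4) k, ℓ.IsHomogeneous 1 ∧
      ∀ f : MvPolynomial (Fin 4) k, f.IsHomogeneous 1 →
        Ideal.Quotient.mk I (ℓ * f) = 0 → Ideal.Quotient.mk I f = 0 := by
  rintro ⟨ℓ, hℓ, hinj⟩
  have h2 : (2 : MvPolynomial (Fin 4) k) = 0 := by
    have := CharP.cast_eq_zero (MvPolynomial (Fin 4) k) 2
    exact_mod_cast this
  set a := coeff (Finsupp.single 0 1) ℓ with ha
  set b := coeff (Finsupp.single 1 1) ℓ with hb
  set c := coeff (Finsupp.single 2 1) ℓ with hc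
  set d := coeff (Finsupp.single 3 1) ℓ with hd
  have hdec : ℓ = C a * X 0 + C b * X 1 + C c * X 2 + C d * X 3 := decomp1 k ℓ hℓ
  set f : MvPolynomial (Fin 4) k := C b * X 1 + C c * X 2 + C d * X 3 with hfdef
  have hf : f.IsHomogeneous 1 :=
    ((((isHomogeneous_X k 1).C_mul b).add ((isHomogeneous_X k 2).C_mul c)).add
      ((isHomogeneous_X k 3).C_mul d))
  have hprod : ℓ * f = C a * C b * (X 0 * X 1) + C a * C c * (X 0 * X 2)
      + C a * C d * (X 0 * X 3) + C b * C b * (X 1 ^ 2) + C c * C c * (X 2 ^ 2)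
      + C d * C d * (X 3 ^ 2) := by
    rw [hdec, hfdef]
    linear_combination (C b * C c * X 1 * X 2 + C b * C d * X 1 * X 3
      + C c * C d * X 2 * X 3 : MvPolynomial (Fin 4) k) * h2
  have hmemg : ∀ g ∈ ({X 0 * X 1, X 0 * X 2, X 0 * X 3,
      X 1 ^ 2, X 2 ^ 2, X 3 ^ 2, X 0 ^ 3 + X 1 * X 2 * X 3} :
        Set (MvPolynomial (Fin 4) k)), g ∈ I := by
    intro g hg; rw [hI]; exact Ideal.subset_span hg
  have m1 := Set.mem_insert (X 0 * X 1 : MvPolynomial (Fin 4) k)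
    {X 0 * X 2, X 0 * X 3, X 1 ^ 2, X 2 ^ 2, X 3 ^ 2, X 0 ^ 3 + X 1 * X 2 * X 3}
  have m2 : (X 0 * X 2 : MvPolynomial (Fin 4) k) ∈ ({X 0 * X 1, X 0 * X 2, X 0 * X 3,
      X 1 ^ 2, X 2 ^ 2, X 3 ^ 2, X 0 ^ 3 + X 1 * X 2 * X 3} :
        Set (MvPolynomial (Fin 4) k)) :=
    Set.mem_insert_of_mem _ (Set.mem_insert _ _)
  have m3 : (X 0 * X 3 : MvPolynomial (Fin 4) k) ∈ ({X 0 * X 1, X 0 * X 2, X 0 * X 3,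
      X 1 ^ 2, X 2 ^ 2, X 3 ^ 2, X 0 ^ 3 + X 1 * X 2 * X 3} :
        Set (MvPolynomial (Fin 4) k)) :=
    Set.mem_insert_of_mem _ (Set.mem_insert_of_mem _ (Set.mem_insert _ _))
  have m4 : (X 1 ^ 2 : MvPolynomial (Fin 4) k) ∈ ({X 0 * X 1, X 0 * X 2, X 0 * X 3,
      X 1 ^ 2, X 2 ^ 2, X 3 ^ 2, X 0 ^ 3 + X 1 * X 2 * X 3} :
        Set (MvPolynomial (Fin 4) k)) :=
    Set.mem_insert_of_mem _ (Set.mem_insert_of_mem _ (Set.mem_insert_of_mem _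
      (Set.mem_insert _ _)))
  have m5 : (X 2 ^ 2 : MvPolynomial (Fin 4) k) ∈ ({X 0 * X 1, X 0 * X 2, X 0 * X 3,
      X 1 ^ 2, X 2 ^ 2, X 3 ^ 2, X 0 ^ 3 + X 1 * X 2 * X 3} :
        Set (MvPolynomial (Fin 4) k)) :=
    Set.mem_insert_of_mem _ (Set.mem_insert_of_mem _ (Set.mem_insert_of_mem _
      (Set.mem_insert_of_mem _ (Set.mem_insert _ _))))
  have m6 : (X 3 ^ 2 : MvPolynomial (Fin 4) k) ∈ ({X 0 * X 1, X 0 * X 2, X 0 * X 3,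
      X 1 ^ 2, X 2 ^ 2, X 3 ^ 2, X 0 ^ 3 + X 1 * X 2 * X 3} :
        Set (MvPolynomial (Fin 4) k)) :=
    Set.mem_insert_of_mem _ (Set.mem_insert_of_mem _ (Set.mem_insert_of_mem _
      (Set.mem_insert_of_mem _ (Set.mem_insert_of_mem _ (Set.mem_insert _ _)))))
  have hmem : ℓ * f ∈ I := by
    rw [hprod]
    exact add_mem (add_mem (add_mem (add_mem (add_mem
      (Ideal.mul_mem_left _ _ (hmemg _ m1)) (Ideal.mul_mem_left _ _ (hmemg _ m2)))
      (Ideal.mul_mem_left _ _ (hmemg _ m3))) (Ideal.mul_mem_left _ _ (hmemg _ m4)))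
      (Ideal.mul_mem_left _ _ (hmemg _ m5))) (Ideal.mul_mem_left _ _ (hmemg _ m6))
  have hfI : f ∈ I := Ideal.Quotient.eq_zero_iff_mem.mp
    (hinj f hf (Ideal.Quotient.eq_zero_iff_mem.mpr hmem))
  have hsdeg : ∀ i : Fin 4, (Finsupp.single i 1 : Fin 4 →₀ ℕ).degree ≤ 1 := by
    intro i; fin_cases i <;> simp [deg4, Finsupp.single_apply]
  have hb0 : b = 0 := by
    have := lowcoeff k f (hI ▸ hfI) (Finsupp.single 1 1) (hsdeg 1)
    simpa (config := { decide := true }) [hfdef, coeff_X', Finsupp.single_eq_single_iff]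
      using this
  have hc0 : c = 0 := by
    have := lowcoeff k f (hI ▸ hfI) (Finsupp.single 2 1) (hsdeg 2)
    simpa (config := { decide := true }) [hfdef, coeff_X', Finsupp.single_eq_single_iff]
      using this
  have hd0 : d = 0 := by
    have := lowcoeff k f (hI ▸ hfI) (Finsupp.single 3 1) (hsdeg 3)
    simpa (config := { decide := true }) [hfdef, coeff_X', Finsupp.single_eq_single_iff]
      using this
  have hℓeq : ℓ = C a * X 0 := by rw [hdec, hb0, hc0, hd0]; simp
  have hX1 : (X 1 : MvPolynomial (Fin 4) k) ∈ I := by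
    refine Ideal.Quotient.eq_zero_iff_mem.mp
      (hinj (X 1) (isHomogeneous_X k 1) (Ideal.Quotient.eq_zero_iff_mem.mpr ?_))
    rw [hℓeq, mul_assoc]
    exact Ideal.mul_mem_left _ _ (hmemg _ m1)
  have := lowcoeff k (X 1) (hI ▸ hX1) (Finsupp.single 1 1) (hsdeg 1)
  simp [coeff_X'] at this
end

section
/- Let R be an integral domain and a,b,c,d,e,f,g,h,i,j,k,l,m ∈ R. Define F_0 = fi − h^2, F_1 = fg − 2eh + il, F_2 = gl − e^2, F_3 = im − fh, F_4 = gm − 2ef + hl, F_5 = hm − f^2, F_6 = de^2 − d^2f + fgj − 2ehj + 2dhk − ik^2 − dgl + ijl, F_7 = gjl − e^2j + 2dek − gk^2 − d^2l, F_8 = gjm − 2efj + e^2k + 2dfk − hk^2 + hjl − gkl − d^2m. If F_0 = F_1 = ⋯ = F_8 = 0, then all 2×2 minors of the 2×6 matrix [[g,h,i,d,e,f],[e,f,h,k,l,m]] vanish. -/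
/-!
Write `A = [[i,h],[h,f]]`, `B = [[g,e],[e,l]]`, `C = [[h,f],[f,m]]` and
`q_X(x, y) = X₁₁ x² - 2 X₁₂ x y + X₂₂ y²`. Then `F₀, F₂, F₅` say that `A, B, C` are singular,
`F₁` and `F₄` are the mixed discriminants of `(A, B)` and `(B, C)`, and modulo these
`F₆ ≡ -q_A(k, d)`, `F₇ ≡ -q_B(k, d)`, `F₈ ≡ -q_C(k, d)`. Two singular symmetric matrices with
vanishing mixed discriminant are proportional, and a vector isotropic for a singular form lies in
its kernel; both facts hold in any reduced ring because in each case the square of the desired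
minor is a combination of the hypotheses.
-/

section SingularSymmetric

variable {R : Type*} [CommRing R] [IsReduced R]

theorem mul_eq_mul_of_isotropic_of_singular {a b c x y : R} (hdet : a * c = b ^ 2)
    (hq : a * x ^ 2 - 2 * b * x * y + c * y ^ 2 = 0) : a * x = b * y ∧ b * x = c * y :=
  ⟨sub_eq_zero.mp <| eq_zero_of_pow_eq_zero (n := 2) <| by
      linear_combination a * hq - y ^ 2 * hdet,
    sub_eq_zero.mp <| eq_zero_of_pow_eq_zero (n := 2) <| by
      linear_combination c * hq - x ^ 2 * hdet⟩

theorem cross_mul_eq_of_mixedDisc_eq_zero_of_singular {a b c a' b' c' : R}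
    (hdet : a * c = b ^ 2) (hdet' : a' * c' = b' ^ 2)
    (hmix : a * c' - 2 * b * b' + c * a' = 0) :
    a * b' = b * a' ∧ b * c' = c * b' ∧ a * c' = b * b' ∧ c * a' = b * b' :=
  ⟨sub_eq_zero.mp <| eq_zero_of_pow_eq_zero (n := 2) <| by
      linear_combination a * a' * hmix - a' ^ 2 * hdet - a ^ 2 * hdet',
    sub_eq_zero.mp <| eq_zero_of_pow_eq_zero (n := 2) <| by
      linear_combination c * c' * hmix - c' ^ 2 * hdet - c ^ 2 * hdet',
    sub_eq_zero.mp <| eq_zero_of_pow_eq_zero (n := 2) <| by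
      linear_combination a * c' * hmix - a * c * hdet' - b' ^ 2 * hdet,
    sub_eq_zero.mp <| eq_zero_of_pow_eq_zero (n := 2) <| by
      linear_combination c * a' * hmix - a' * c' * hdet - b ^ 2 * hdet'⟩

end SingularSymmetric

/-- in an integral domain, the vanishing of `F₀,…,F₈` forces the
vanishing of all fifteen 2×2 minors of `[[g,h,i,d,e,f],[e,f,h,k,l,m]]`. -/
theorem stmt_8 (R : Type*) [CommRing R] [IsDomain R]
    (d e f g h i j k l m : R)
    (hF0 : f * i - h ^ 2 = 0)
    (hF1 : f * g - 2 * e * h + i * l = 0)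
    (hF2 : g * l - e ^ 2 = 0)
    (hF3 : i * m - f * h = 0)
    (hF4 : g * m - 2 * e * f + h * l = 0)
    (hF5 : h * m - f ^ 2 = 0)
    (hF6 : d * e ^ 2 - d ^ 2 * f + f * g * j - 2 * e * h * j + 2 * d * h * k
      - i * k ^ 2 - d * g * l + i * j * l = 0)
    (hF7 : g * j * l - e ^ 2 * j + 2 * d * e * k - g * k ^ 2 - d ^ 2 * l = 0)
    (hF8 : g * j * m - 2 * e * f * j + e ^ 2 * k + 2 * d * f * k - h * k ^ 2
      + h * j * l - g * k * l - d ^ 2 * m = 0) :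
    f * g - e * h = 0 ∧ g * h - e * i = 0 ∧ h ^ 2 - f * i = 0 ∧
    g * k - d * e = 0 ∧ h * k - d * f = 0 ∧ i * k - d * h = 0 ∧
    g * l - e ^ 2 = 0 ∧ h * l - e * f = 0 ∧ i * l - e * h = 0 ∧
    d * l - e * k = 0 ∧ g * m - e * f = 0 ∧ h * m - f ^ 2 = 0 ∧
    i * m - f * h = 0 ∧ d * m - f * k = 0 ∧ e * m - f * l = 0 := by
  have hA : i * f = h ^ 2 := by linear_combination hF0
  have hB : g * l = e ^ 2 := by linear_combination hF2
  have hC : h * m = f ^ 2 := by linear_combination hF5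
  obtain ⟨hAB₁, hAB₂, hAB₃, hAB₄⟩ :=
    cross_mul_eq_of_mixedDisc_eq_zero_of_singular hA hB (by linear_combination hF1)
  obtain ⟨-, hBC₂, hBC₃, -⟩ :=
    cross_mul_eq_of_mixedDisc_eq_zero_of_singular hB hC (by linear_combination hF4)
  obtain ⟨hAk, -⟩ := mul_eq_mul_of_isotropic_of_singular (x := k) (y := d) hA
    (by linear_combination j * hF1 - d * hF2 - hF6)
  obtain ⟨hBk₁, hBk₂⟩ := mul_eq_mul_of_isotropic_of_singular (x := k) (y := d) hB
    (by linear_combination j * hF2 - hF7)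
  obtain ⟨hCk₁, hCk₂⟩ := mul_eq_mul_of_isotropic_of_singular (x := k) (y := d) hC
    (by linear_combination j * hF4 - k * hF2 - hF8)
  exact ⟨by linear_combination hAB₄, by linear_combination -hAB₁, by linear_combination -hA,
    by linear_combination hBk₁, by linear_combination hCk₁, by linear_combination hAk, hF2,
    by linear_combination hAB₂, by linear_combination hAB₃, by linear_combination -hBk₂,
    by linear_combination hBC₃, hF5, hF3, by linear_combination -hCk₂,
    by linear_combination hBC₂⟩
end

section
/- Let R be a commutative ring and a,d,e,f,g,h,i,j,k,m,n,p ∈ R. Define I_0 = −af^2g − d^2gk − adhk + dkm^2 + 2dfgn + dhn^2 − 2dmnp + adp^2. Then ag^2(dk − fn)^2 = −gn^2·I_0 + (−d^2g^2k + 2dfg^2n − dim^2n + dghn^2)(n^2 − ak) + (−dkm^2n + dmn^2p)(ai − gn) + (dmn^3 − adn^2p)(im − gp). In particular, ag^2(dk − fn)^2 lies in the ideal generated by I_0, n^2 − ak, ai − gn, and im − gp. -/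
theorem Ideal.mem_span_four_of_eq {R : Type*} [CommSemiring R] {x y₁ y₂ y₃ y₄ c₁ c₂ c₃ c₄ : R}
    (h : x = c₁ * y₁ + c₂ * y₂ + c₃ * y₃ + c₄ * y₄) :
    x ∈ Ideal.span {y₁, y₂, y₃, y₄} := by
  have mem : ∀ y ∈ ({y₁, y₂, y₃, y₄} : Set R), y ∈ Ideal.span {y₁, y₂, y₃, y₄} :=
    fun _ hy => Ideal.subset_span hy
  rw [h]
  refine add_mem (add_mem (add_mem ?_ ?_) ?_) ?_ <;> apply Ideal.mul_mem_left <;>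
    apply mem <;> simp

theorem stmt_10_general (R : Type*) [CommRing R] (a d f g h i k m n p : R) :
    a * g ^ 2 * (d * k - f * n) ^ 2 =
      -(g * n ^ 2) *
        (-(a * f ^ 2 * g) - d ^ 2 * g * k - a * d * h * k + d * k * m ^ 2
          + 2 * d * f * g * n + d * h * n ^ 2 - 2 * d * m * n * p
          + a * d * p ^ 2) +
      (-(d ^ 2 * g ^ 2 * k) + 2 * d * f * g ^ 2 * n - d * i * m ^ 2 * n
          + d * g * h * n ^ 2) * (n ^ 2 - a * k) +
      (-(d * k * m ^ 2 * n) + d * m * n ^ 2 * p) * (a * i - g * n) +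
      (d * m * n ^ 3 - a * d * n ^ 2 * p) * (i * m - g * p) ∧
    a * g ^ 2 * (d * k - f * n) ^ 2 ∈ Ideal.span
      {(-(a * f ^ 2 * g) - d ^ 2 * g * k - a * d * h * k + d * k * m ^ 2
          + 2 * d * f * g * n + d * h * n ^ 2 - 2 * d * m * n * p
          + a * d * p ^ 2),
        n ^ 2 - a * k, a * i - g * n, i * m - g * p} := by
  have identity : a * g ^ 2 * (d * k - f * n) ^ 2 =
      -(g * n ^ 2) *
        (-(a * f ^ 2 * g) - d ^ 2 * g * k - a * d * h * k + d * k * m ^ 2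
          + 2 * d * f * g * n + d * h * n ^ 2 - 2 * d * m * n * p
          + a * d * p ^ 2) +
      (-(d ^ 2 * g ^ 2 * k) + 2 * d * f * g ^ 2 * n - d * i * m ^ 2 * n
          + d * g * h * n ^ 2) * (n ^ 2 - a * k) +
      (-(d * k * m ^ 2 * n) + d * m * n ^ 2 * p) * (a * i - g * n) +
      (d * m * n ^ 3 - a * d * n ^ 2 * p) * (i * m - g * p) := by
    ring
  exact ⟨identity, Ideal.mem_span_four_of_eq identity⟩

/-- with
`I₀ = −af²g − d²gk − adhk + dkm² + 2dfgn + dhn² − 2dmnp + adp²`, the identity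
`ag²(dk − fn)² = −gn²·I₀ + (−d²g²k + 2dfg²n − dim²n + dghn²)(n² − ak)
+ (−dkm²n + dmn²p)(ai − gn) + (dmn³ − adn²p)(im − gp)` holds; in particular
`ag²(dk − fn)²` lies in the ideal `(I₀, n² − ak, ai − gn, im − gp)`. -/
theorem stmt_10 (R : Type*) [CommRing R] (a d e f g h i j k m n p : R) :
    a * g ^ 2 * (d * k - f * n) ^ 2 =
      -(g * n ^ 2) *
        (-(a * f ^ 2 * g) - d ^ 2 * g * k - a * d * h * k + d * k * m ^ 2
          + 2 * d * f * g * n + d * h * n ^ 2 - 2 * d * m * n * p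
          + a * d * p ^ 2) +
      (-(d ^ 2 * g ^ 2 * k) + 2 * d * f * g ^ 2 * n - d * i * m ^ 2 * n
          + d * g * h * n ^ 2) * (n ^ 2 - a * k) +
      (-(d * k * m ^ 2 * n) + d * m * n ^ 2 * p) * (a * i - g * n) +
      (d * m * n ^ 3 - a * d * n ^ 2 * p) * (i * m - g * p) ∧
    a * g ^ 2 * (d * k - f * n) ^ 2 ∈ Ideal.span
      {(-(a * f ^ 2 * g) - d ^ 2 * g * k - a * d * h * k + d * k * m ^ 2
          + 2 * d * f * g * n + d * h * n ^ 2 - 2 * d * m * n * p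
          + a * d * p ^ 2),
        n ^ 2 - a * k, a * i - g * n, i * m - g * p} :=
  stmt_10_general R a d f g h i k m n p
end
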